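/- Let n ≥ 2 and let λ₁ ≥ λ₂ ≥ ⋯ ≥ λₙ be real numbers satisfying Θ(λ) ≥ (n−2)·π/2. Then for every k with 1 ≤ k ≤ n−1 the elementary symmetric polynomial satisfies σ_k(λ₁, …, λₙ) ≥ 0. -/

import Mathlib

/-!
Write `x i₀` for a negative entry (if there is none, every `σ_k` is trivially nonnegative).
In terms of the angles `π/2 - arctan xᵢ ∈ (0, π)` the hypothesis says that they sum to at most `π`.
The angle of `x i₀` exceeds `π/2`, so every other angle is below `π/2`: the other entries are
positive, and their angles are `arctan (xᵢ⁻¹)`. Subadditivity of `arctan` on `[0, ∞)` then turns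
the angle budget into `∑_{i ≠ i₀} xᵢ⁻¹ ≤ -(x i₀)⁻¹`. Splitting off `x i₀` from `x`, leaving `x'`,
`σ_k(x) = σ_k(x') + x i₀ σ_{k-1}(x')`, and for positive `x'` with `k` below its length
`σ_{k-1}(x') ≤ (∑ xᵢ⁻¹) σ_k(x')`, since `∑ᵢ σ_{k-1}(x' without i) = (#x' - k + 1) σ_{k-1}(x')`.
-/

open Real Finset

section Esymm

variable {ι R : Type*}

def esymm [CommSemiring R] (s : Finset ι) (x : ι → R) (k : ℕ) : R :=
  ∑ T ∈ s.powersetCard k, ∏ i ∈ T, x i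

@[simp]
lemma esymm_zero [CommSemiring R] (s : Finset ι) (x : ι → R) : esymm s x 0 = 1 := by
  simp [esymm]

lemma esymm_nonneg [CommSemiring R] [PartialOrder R] [IsOrderedRing R] {s : Finset ι}
    {x : ι → R} (hx : ∀ i ∈ s, 0 ≤ x i) (k : ℕ) : 0 ≤ esymm s x k :=
  sum_nonneg fun _ hT => prod_nonneg fun i hi => hx i ((mem_powersetCard.mp hT).1 hi)

variable [DecidableEq ι]

lemma esymm_insert [CommSemiring R] {s : Finset ι} {i : ι} (hi : i ∉ s) (x : ι → R) (k : ℕ) :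
    esymm (insert i s) x (k + 1) = esymm s x (k + 1) + x i * esymm s x k := by
  have hiT : ∀ T ∈ s.powersetCard k, i ∉ T := fun T hT h => hi ((mem_powersetCard.mp hT).1 h)
  have hdisj : Disjoint (s.powersetCard (k + 1)) ((s.powersetCard k).image (insert i)) := by
    refine disjoint_left.mpr fun S hS hS' => ?_
    obtain ⟨T, -, rfl⟩ := mem_image.mp hS'
    exact hi ((mem_powersetCard.mp hS).1 (mem_insert_self i T))
  have hinj : Set.InjOn (insert i) (s.powersetCard k : Set (Finset ι)) :=
    fun S hS T hT hST => by rw [← erase_insert (hiT S hS), ← erase_insert (hiT T hT), hST]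
  rw [esymm, powersetCard_succ_insert hi, sum_union hdisj, sum_image hinj, esymm, esymm, mul_sum]
  exact congrArg _ (sum_congr rfl fun T hT => prod_insert (hiT T hT))

lemma sum_esymm_erase [CommSemiring R] (s : Finset ι) (x : ι → R) (k : ℕ) :
    ∑ i ∈ s, esymm (s.erase i) x k = (#s - k) • esymm s x k := by
  simp only [esymm]
  rw [sum_comm' (t' := s.powersetCard k) (s' := fun T => s \ T)]
  · rw [smul_sum]
    refine sum_congr rfl fun T hT => ?_
    rw [sum_const, card_sdiff_of_subset (mem_powersetCard.mp hT).1, (mem_powersetCard.mp hT).2]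
  · intro i T
    simp only [mem_powersetCard, subset_erase, mem_sdiff]
    tauto

lemma esymm_le_sum_inv_mul_esymm_succ [Field R] [LinearOrder R] [IsStrictOrderedRing R]
    {s : Finset ι} {x : ι → R} (hx : ∀ i ∈ s, 0 < x i) {k : ℕ} (hk : k < #s) :
    esymm s x k ≤ (∑ i ∈ s, (x i)⁻¹) * esymm s x (k + 1) := by
  have hsplit : ∀ i ∈ s, esymm (s.erase i) x k ≤ (x i)⁻¹ * esymm s x (k + 1) := fun i hi => by
    rw [← insert_erase hi, esymm_insert (notMem_erase i s), insert_erase hi, mul_add,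
      inv_mul_cancel_left₀ (hx i hi).ne']
    exact le_add_of_nonneg_left <| mul_nonneg (inv_pos.mpr (hx i hi)).le <|
      esymm_nonneg (fun j hj => (hx j (mem_of_mem_erase hj)).le) (k + 1)
  calc esymm s x k ≤ (#s - k) • esymm s x k :=
        le_smul_of_one_le_left (esymm_nonneg (fun i hi => (hx i hi).le) k) (by omega)
    _ = ∑ i ∈ s, esymm (s.erase i) x k := (sum_esymm_erase s x k).symm
    _ ≤ (∑ i ∈ s, (x i)⁻¹) * esymm s x (k + 1) := by
        rw [sum_mul]
        exact sum_le_sum hsplit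

end Esymm

lemma arctan_add_le {x y : ℝ} (hx : 0 ≤ x) (hy : 0 ≤ y) :
    arctan (x + y) ≤ arctan x + arctan y := by
  rcases lt_or_ge (x * y) 1 with h | h
  · rw [arctan_add h]
    apply arctan_strictMono.monotone
    rw [le_div_iff₀ (by nlinarith)]
    nlinarith [mul_nonneg (mul_nonneg hx hy) (add_nonneg hx hy)]
  · have hx' : 0 < x := by nlinarith
    have : x⁻¹ ≤ y := by rwa [inv_le_iff_one_le_mul₀' hx']
    have := arctan_strictMono.monotone this
    have := arctan_lt_pi_div_two (x + y)
    rw [arctan_inv_of_pos hx'] at *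
    linarith

lemma arctan_sum_le {ι : Type*} (s : Finset ι) {x : ι → ℝ} (hx : ∀ i ∈ s, 0 ≤ x i) :
    arctan (∑ i ∈ s, x i) ≤ ∑ i ∈ s, arctan (x i) := by
  induction s using Finset.cons_induction with
  | empty => simp
  | cons a s ha ih =>
    rw [sum_cons, sum_cons]
    have hs : ∀ i ∈ s, 0 ≤ x i := fun i hi => hx i (mem_cons_of_mem hi)
    calc arctan (x a + ∑ i ∈ s, x i) ≤ arctan (x a) + arctan (∑ i ∈ s, x i) :=
          arctan_add_le (hx a (mem_cons_self a s)) (sum_nonneg hs)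
      _ ≤ arctan (x a) + ∑ i ∈ s, arctan (x i) := by gcongr; exact ih hs

section AngleBudget

variable {ι : Type*} [DecidableEq ι] {s : Finset ι} {x : ι → ℝ} {i₀ : ι}

lemma sum_pi_div_two_sub_arctan_erase_le (hΘ : ((#s : ℝ) - 2) * (π / 2) ≤ ∑ i ∈ s, arctan (x i))
    (hi₀ : i₀ ∈ s) :
    ∑ i ∈ s.erase i₀, (π / 2 - arctan (x i)) ≤ π / 2 + arctan (x i₀) := by
  have hcard : ((#(s.erase i₀) : ℕ) : ℝ) = #s - 1 := by
    rw [card_erase_of_mem hi₀, Nat.cast_pred (card_pos.mpr ⟨i₀, hi₀⟩)]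
  rw [sum_sub_distrib, sum_const, nsmul_eq_mul, hcard]
  have := sum_erase_add s (fun i => arctan (x i)) hi₀
  linarith

lemma pos_of_mem_erase_of_neg (hΘ : ((#s : ℝ) - 2) * (π / 2) ≤ ∑ i ∈ s, arctan (x i))
    (hi₀ : i₀ ∈ s) (hneg : x i₀ < 0) {i : ι} (hi : i ∈ s.erase i₀) : 0 < x i := by
  have hbudget := sum_pi_div_two_sub_arctan_erase_le hΘ hi₀
  have hterm : π / 2 - arctan (x i) ≤ ∑ j ∈ s.erase i₀, (π / 2 - arctan (x j)) :=
    single_le_sum (f := fun j => π / 2 - arctan (x j))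
      (fun j _ => sub_nonneg.mpr (arctan_lt_pi_div_two _).le) hi
  have : arctan (x i₀) < 0 := arctan_lt_zero.mpr hneg
  exact arctan_pos.mp (by linarith)

lemma sum_inv_erase_le_of_neg (hΘ : ((#s : ℝ) - 2) * (π / 2) ≤ ∑ i ∈ s, arctan (x i))
    (hi₀ : i₀ ∈ s) (hneg : x i₀ < 0) :
    ∑ i ∈ s.erase i₀, (x i)⁻¹ ≤ -(x i₀)⁻¹ := by
  have hpos := fun i (hi : i ∈ s.erase i₀) => pos_of_mem_erase_of_neg hΘ hi₀ hneg hi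
  refine arctan_strictMono.le_iff_le.mp ?_
  calc arctan (∑ i ∈ s.erase i₀, (x i)⁻¹) ≤ ∑ i ∈ s.erase i₀, arctan (x i)⁻¹ :=
        arctan_sum_le _ fun i hi => (inv_pos.mpr (hpos i hi)).le
    _ = ∑ i ∈ s.erase i₀, (π / 2 - arctan (x i)) :=
        sum_congr rfl fun i hi => arctan_inv_of_pos (hpos i hi)
    _ ≤ π / 2 + arctan (x i₀) := sum_pi_div_two_sub_arctan_erase_le hΘ hi₀
    _ = arctan (-(x i₀)⁻¹) := by
        rw [← inv_neg, arctan_inv_of_pos (neg_pos.mpr hneg), arctan_neg]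
        ring

end AngleBudget

lemma esymm_nonneg_of_sum_arctan {ι : Type*} [DecidableEq ι] {s : Finset ι} {x : ι → ℝ}
    (hΘ : ((#s : ℝ) - 2) * (π / 2) ≤ ∑ i ∈ s, arctan (x i)) {k : ℕ} (hk : k < #s) :
    0 ≤ esymm s x k := by
  by_cases hnonneg : ∀ i ∈ s, 0 ≤ x i
  · exact esymm_nonneg hnonneg k
  obtain ⟨i₀, hi₀, hneg⟩ : ∃ i₀ ∈ s, x i₀ < 0 := by simpa using hnonneg
  obtain _ | m := k
  · simp
  have hpos := fun i (hi : i ∈ s.erase i₀) => pos_of_mem_erase_of_neg hΘ hi₀ hneg hi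
  have hm : m < #(s.erase i₀) := by rw [card_erase_of_mem hi₀]; omega
  have hlower := esymm_le_sum_inv_mul_esymm_succ hpos hm
  have hinv := sum_inv_erase_le_of_neg hΘ hi₀ hneg
  have hrest := esymm_nonneg (fun i hi => (hpos i hi).le) (m + 1)
  rw [← insert_erase hi₀, esymm_insert (notMem_erase i₀ s)]
  have hprod : -1 ≤ x i₀ * ∑ i ∈ s.erase i₀, (x i)⁻¹ := by
    simpa [mul_inv_cancel₀ hneg.ne] using mul_le_mul_of_nonpos_left hinv hneg.le
  nlinarith

theorem stmt_2 (n : ℕ) (l : Fin n → ℝ)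
    (hΘ : ((n : ℝ) - 2) * (π / 2) ≤ ∑ i, Real.arctan (l i)) :
    ∀ k : ℕ, 1 ≤ k → k ≤ n - 1 →
      0 ≤ ∑ S ∈ Finset.powersetCard k (Finset.univ : Finset (Fin n)), ∏ i ∈ S, l i := by
  intro k hk1 hk2
  exact esymm_nonneg_of_sum_arctan (s := univ) (by simpa using hΘ)
    (by rw [card_univ, Fintype.card_fin]; omega)
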